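/- Let m = n+1 with λ₁ > ... > λ_m > 0. For every convex combination α* = ∑_{i=1}^m c_i α_{(τ_i)} with c_i > 0 and ∑ c_i = 1, where τ_i = {1,...,m}\{i}, there exists ψ ∈ ℝ^m with strictly positive entries (namely ψ_i = π_{τ_i}/c_i after normalization) such that α(ψ) = α*. Hence the closure of the image of α equals the convex hull of {α_{(τ_i)} : i = 1,...,m}. -/

import Mathlib

open Finset Matrix

/-- `(a,b)` entry `λ_{τ(a)}^{b+1}`: the matrix `S_τᵀ Λ V`. -/
noncomputable def selLV {m : ℕ} (l : Fin m → ℝ) (n : ℕ) (τ : Finset (Fin m))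
    (h : τ.card = n) : Matrix (Fin n) (Fin n) ℝ :=
  Matrix.of fun a b => l (τ.orderEmbOfFin h a) ^ ((b : ℕ) + 1)

/-- The extreme coefficient vector `α_{(τ)} = (S_τᵀ Λ V)⁻¹ 𝟙`. -/
noncomputable def alphaTau {m : ℕ} (l : Fin m → ℝ) (n : ℕ) (τ : Finset (Fin m))
    (h : τ.card = n) : Fin n → ℝ :=
  (selLV l n τ h)⁻¹ *ᵥ (fun _ => 1)

/-- The matrix `Vᵀ Ψ Λ V`, with `(a,b)` entry `∑ i, λ_i^a ψ_i λ_i^{b+1}`. -/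
noncomputable def Bmat {m : ℕ} (l ψ : Fin m → ℝ) (n : ℕ) : Matrix (Fin n) (Fin n) ℝ :=
  Matrix.of fun a b => ∑ i : Fin m, l i ^ (a : ℕ) * ψ i * l i ^ ((b : ℕ) + 1)

/-- The coefficient map `α(ψ) = (Vᵀ Ψ Λ V)⁻¹ Vᵀ ψ`. -/
noncomputable def alphaMap {m : ℕ} (l ψ : Fin m → ℝ) (n : ℕ) : Fin n → ℝ :=
  (Bmat l ψ n)⁻¹ *ᵥ (fun a => ∑ i : Fin m, l i ^ (a : ℕ) * ψ i)

/-- The shrinkage vector `ω(ψ) = Λ V α(ψ)`. -/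
noncomputable def omegaMap {m : ℕ} (l ψ : Fin m → ℝ) (n : ℕ) : Fin m → ℝ :=
  fun i => ∑ j : Fin n, l i ^ ((j : ℕ) + 1) * alphaMap l ψ n j

/-- The relative residual vector `z(ψ) = 𝟙 - ω(ψ)`. -/
noncomputable def zMap {m : ℕ} (l ψ : Fin m → ℝ) (n : ℕ) : Fin m → ℝ :=
  fun i => 1 - omegaMap l ψ n i

/-- `ψ^τ = ∏_{i∈τ} ψ_i`. -/
def psiPow {m : ℕ} (ψ : Fin m → ℝ) (τ : Finset (Fin m)) : ℝ := ∏ i ∈ τ, ψ i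

/-- `π_τ = (∏_{j∈τ} λ_j) ∏_{j<i∈τ} (λ_i - λ_j)²`. -/
def piTau {m : ℕ} (l : Fin m → ℝ) (τ : Finset (Fin m)) : ℝ :=
  (∏ j ∈ τ, l j) * ∏ j ∈ τ, ∏ i ∈ τ.filter (fun x => j < x), (l i - l j) ^ 2

/-- The number of nonzero entries of a vector. -/
noncomputable def suppCard {m : ℕ} (ψ : Fin m → ℝ) : ℕ :=
  ({i : Fin m | ψ i ≠ 0}).ncard

/-!
The extreme point `α_{(τ_k)}` satisfies the interpolation conditions at every node except `λ_k`,
so `(Vᵀ Ψ Λ V) α_{(τ_k)} = Vᵀ ψ - ψ_k z_k (λ_k^a)_a`, where `z_k` is its residual at `λ_k`.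
Cramer's rule for the full Vandermonde matrix gives `π_{τ_k} z_k = (-1)^k det V_k · det V`, with
`V_k` the Vandermonde matrix of the nodes other than `λ_k`, and the cofactors `(-1)^k det V_k` are
orthogonal to every column `(λ_k^a)_k`, `a < n` (Laplace expansion of a determinant with a repeated
column). As `ψ_k ψ^{τ_k} = ∏ ψ`, the average of the `α_{(τ_k)}` with weights `ψ^{τ_k} π_{τ_k}`
therefore solves the normal equations: this is the averaging theorem. The choice
`ψ_k = π_{τ_k} / c_k` makes these weights proportional to `c`. The averaging theorem puts the image
of `α` in the convex hull, and the image contains all strictly positive convex combinations, which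
are dense in the hull.
-/

lemma sum_neg_one_pow_mul_det_vandermonde_succAbove {R : Type*} [CommRing R] {n : ℕ}
    (x : Fin (n + 1) → R) (a : Fin n) :
    ∑ k : Fin (n + 1), (-1) ^ (k : ℕ) * (vandermonde (x ∘ k.succAbove)).det * x k ^ (a : ℕ) =
      0 := by
  set N := (vandermonde x).updateCol (Fin.last n) fun i => x i ^ (a : ℕ)
  have hN : N.det = 0 :=
    det_zero_of_column_eq (Fin.castSucc_lt_last a).ne fun i => by simp [N, vandermonde]
  have hexpand : N.det =
      (-1) ^ n *
        ∑ k : Fin (n + 1), (-1) ^ (k : ℕ) * (vandermonde (x ∘ k.succAbove)).det * x k ^ (a : ℕ) := by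
    rw [det_succ_column N (Fin.last n), mul_sum]
    refine sum_congr rfl fun k _ => ?_
    have hminor :
        N.submatrix k.succAbove (Fin.last n).succAbove = vandermonde (x ∘ k.succAbove) := by
      ext i j
      simp [N, vandermonde, Fin.succAbove_last]
    simp only [hminor, N, updateCol_self, Fin.val_last, pow_add]
    ring
  simpa using hexpand.symm.trans hN

section Vandermonde

variable {m n : ℕ}

lemma selLV_eq_diagonal_mul_vandermonde (l : Fin m → ℝ) (τ : Finset (Fin m)) (h : τ.card = n) :
    selLV l n τ h =
      diagonal (l ∘ τ.orderEmbOfFin h) * vandermonde (l ∘ τ.orderEmbOfFin h) := by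
  ext a b
  simp [selLV, vandermonde, diagonal_mul, pow_succ, mul_comm]

lemma selLV_det_ne_zero {l : Fin m → ℝ} (hl : ∀ i, l i ≠ 0) (hinj : Function.Injective l)
    (τ : Finset (Fin m)) (h : τ.card = n) : (selLV l n τ h).det ≠ 0 := by
  rw [selLV_eq_diagonal_mul_vandermonde, det_mul, det_diagonal]
  exact mul_ne_zero (prod_ne_zero_iff.2 fun a _ => hl _)
    (det_vandermonde_ne_zero_iff.2 (hinj.comp (τ.orderEmbOfFin h).injective))

lemma sum_pow_succ_mul_alphaTau_of_mem {l : Fin m → ℝ} (hl : ∀ i, l i ≠ 0)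
    (hinj : Function.Injective l) {τ : Finset (Fin m)} (h : τ.card = n) {i : Fin m}
    (hi : i ∈ τ) : ∑ b : Fin n, l i ^ ((b : ℕ) + 1) * alphaTau l n τ h b = 1 := by
  obtain ⟨a, rfl⟩ : i ∈ Set.range (τ.orderEmbOfFin h) := by rwa [range_orderEmbOfFin]
  have hinv : selLV l n τ h *ᵥ alphaTau l n τ h = fun _ => 1 := by
    rw [alphaTau, mulVec_mulVec,
      mul_nonsing_inv _ (isUnit_iff_ne_zero.2 (selLV_det_ne_zero hl hinj τ h)), one_mulVec]
  simpa [mulVec, dotProduct, selLV] using congrFun hinv a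

lemma dotProduct_Bmat_mulVec (l ψ : Fin m → ℝ) (v : Fin n → ℝ) :
    v ⬝ᵥ (Bmat l ψ n *ᵥ v) = ∑ i, ψ i * l i * (∑ a : Fin n, l i ^ (a : ℕ) * v a) ^ 2 := by
  simp only [dotProduct, mulVec, Bmat, of_apply, sq, mul_sum, sum_mul]
  rw [sum_comm]
  conv_rhs => rw [sum_comm]
  refine sum_congr rfl fun a _ => ?_
  rw [sum_comm]
  exact sum_congr rfl fun i _ => sum_congr rfl fun b _ => by ring

lemma suppCard_eq_card_filter (ψ : Fin m → ℝ) : suppCard ψ = #{i | ψ i ≠ 0} := by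
  rw [suppCard, ← Set.ncard_coe_finset]
  simp

lemma suppCard_eq_of_forall_ne_zero {ψ : Fin m → ℝ} (h : ∀ i, ψ i ≠ 0) : suppCard ψ = m := by
  simp [suppCard_eq_card_filter, h]

lemma Bmat_det_ne_zero {l ψ : Fin m → ℝ} (hpos : ∀ i, 0 < l i) (hinj : Function.Injective l)
    (hψ : ∀ i, 0 ≤ ψ i) (hsupp : n ≤ suppCard ψ) : (Bmat l ψ n).det ≠ 0 := by
  intro hdet
  obtain ⟨v, hv0, hv⟩ := exists_mulVec_eq_zero_iff.2 hdet
  have hterm : ∀ i, 0 ≤ ψ i * l i * (∑ a : Fin n, l i ^ (a : ℕ) * v a) ^ 2 := fun i => by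
    have := hψ i; have := hpos i; positivity
  have hroot : ∀ i, ψ i ≠ 0 → ∑ a : Fin n, l i ^ (a : ℕ) * v a = 0 := by
    intro i hi
    have hsum : ∑ i, ψ i * l i * (∑ a : Fin n, l i ^ (a : ℕ) * v a) ^ 2 = 0 := by
      rw [← dotProduct_Bmat_mulVec, hv, dotProduct_zero]
    have hi0 := (sum_eq_zero_iff_of_nonneg fun i _ => hterm i).1 hsum i (mem_univ i)
    exact pow_eq_zero_iff two_ne_zero |>.1
      ((mul_eq_zero.1 hi0).resolve_left (mul_ne_zero hi (hpos i).ne'))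
  rw [suppCard_eq_card_filter] at hsupp
  obtain ⟨τ, hτsupp, hτ⟩ := exists_subset_card_eq hsupp
  refine hv0 (eq_zero_of_forall_index_sum_pow_mul_eq_zero
    (hinj.comp (τ.orderEmbOfFin hτ).injective) fun j => hroot _ ?_)
  exact (mem_filter.1 (hτsupp (orderEmbOfFin_mem τ hτ j))).2

end Vandermonde

section Erase

variable {n : ℕ}

lemma card_univ_erase_fin (k : Fin (n + 1)) : (univ.erase k).card = n := by
  simp [card_erase_of_mem]

lemma orderEmbOfFin_univ_erase (k : Fin (n + 1)) :
    ⇑((univ.erase k).orderEmbOfFin (card_univ_erase_fin k)) = k.succAbove :=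
  (orderEmbOfFin_unique _ (fun x => mem_erase.2 ⟨k.succAbove_ne x, mem_univ _⟩)
    k.strictMono_succAbove).symm

/-- The extreme point `α_{(τ_k)}` for `τ_k = {1, …, m} \ {k}`. -/
noncomputable def alphaErase (l : Fin (n + 1) → ℝ) (k : Fin (n + 1)) : Fin n → ℝ :=
  alphaTau l n (univ.erase k) (card_univ_erase_fin k)

/-- The `k`-th entry of `𝟙 - Λ V α_{(τ_k)}`; all other entries vanish. -/
noncomputable def residualErase (l : Fin (n + 1) → ℝ) (k : Fin (n + 1)) : ℝ :=
  1 - ∑ b : Fin n, l k ^ ((b : ℕ) + 1) * alphaErase l k b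

/-- The weight `ψ^{τ_k} π_{τ_k}` of `α_{(τ_k)}` in the averaging theorem. -/
def averagingWeight (l ψ : Fin (n + 1) → ℝ) (k : Fin (n + 1)) : ℝ :=
  psiPow ψ (univ.erase k) * piTau l (univ.erase k)

variable {l : Fin (n + 1) → ℝ}

lemma det_selLV_univ_erase (k : Fin (n + 1)) :
    (selLV l n (univ.erase k) (card_univ_erase_fin k)).det =
      (∏ a, l (k.succAbove a)) * (vandermonde (l ∘ k.succAbove)).det := by
  rw [selLV_eq_diagonal_mul_vandermonde, orderEmbOfFin_univ_erase, det_mul, det_diagonal]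
  rfl

lemma piTau_univ_erase (k : Fin (n + 1)) :
    piTau l (univ.erase k) =
      (∏ a, l (k.succAbove a)) * (vandermonde (l ∘ k.succAbove)).det ^ 2 := by
  have hinj : Function.Injective k.succAbove := Fin.succAbove_right_injective
  have himage : univ.erase k = univ.image k.succAbove := by
    rw [Fin.image_succAbove_univ, compl_singleton]
  have hfilter : ∀ a, (univ.erase k).filter (k.succAbove a < ·) = (Ioi a).image k.succAbove := by
    intro a
    ext i
    simp only [mem_filter, mem_erase, mem_univ, and_true, mem_image, mem_Ioi]
    constructor
    · rintro ⟨hik, hlt⟩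
      obtain ⟨j, rfl⟩ := Fin.exists_succAbove_eq hik
      exact ⟨j, Fin.succAbove_lt_succAbove_iff.1 hlt, rfl⟩
    · rintro ⟨j, hj, rfl⟩
      exact ⟨k.succAbove_ne j, Fin.succAbove_lt_succAbove_iff.2 hj⟩
  rw [piTau, det_vandermonde, ← prod_pow, himage, prod_image hinj.injOn, prod_image hinj.injOn,
    ← himage]
  congr 1
  refine prod_congr rfl fun a _ => ?_
  rw [hfilter, prod_image hinj.injOn, ← prod_pow]
  rfl

lemma piTau_univ_erase_pos (hpos : ∀ i, 0 < l i) (hinj : Function.Injective l)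
    (k : Fin (n + 1)) : 0 < piTau l (univ.erase k) := by
  have hdet : (vandermonde (l ∘ k.succAbove)).det ≠ 0 :=
    det_vandermonde_ne_zero_iff.2 (hinj.comp Fin.succAbove_right_injective)
  rw [piTau_univ_erase]
  exact mul_pos (prod_pos fun a _ => hpos _) (by positivity)

lemma vandermonde_mulVec_cons_neg_alphaErase (hl : ∀ i, l i ≠ 0) (hinj : Function.Injective l)
    (k : Fin (n + 1)) :
    vandermonde l *ᵥ Fin.cons 1 (-alphaErase l k) = Pi.single k (residualErase l k) := by
  funext i
  have hrow : (vandermonde l *ᵥ Fin.cons 1 (-alphaErase l k)) i =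
      1 - ∑ b : Fin n, l i ^ ((b : ℕ) + 1) * alphaErase l k b := by
    simp [mulVec, dotProduct, vandermonde, Fin.sum_univ_succ, sub_eq_add_neg]
  rcases eq_or_ne i k with rfl | hik
  · simp [hrow, residualErase]
  · rw [hrow, Pi.single_eq_of_ne hik, alphaErase,
      sum_pow_succ_mul_alphaTau_of_mem hl hinj _ (mem_erase.2 ⟨hik, mem_univ i⟩), sub_self]

lemma adjugate_vandermonde_zero_apply (k : Fin (n + 1)) :
    (vandermonde l).adjugate 0 k =
      (-1) ^ (k : ℕ) * (selLV l n (univ.erase k) (card_univ_erase_fin k)).det := by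
  rw [adjugate_apply, det_succ_row _ k, sum_eq_single 0]
  · have hminor : (vandermonde l).submatrix k.succAbove Fin.succ =
        selLV l n (univ.erase k) (card_univ_erase_fin k) := by
      ext r c
      simp [vandermonde, selLV, orderEmbOfFin_univ_erase]
    simp [hminor]
  · intro j _ hj
    simp [hj]
  · simp

lemma residualErase_mul_det_selLV (hl : ∀ i, l i ≠ 0) (hinj : Function.Injective l)
    (k : Fin (n + 1)) :
    residualErase l k * ((-1) ^ (k : ℕ) * (selLV l n (univ.erase k) (card_univ_erase_fin k)).det) =
      (vandermonde l).det := by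
  have hcramer := congrFun (congrArg ((vandermonde l).adjugate *ᵥ ·)
    (vandermonde_mulVec_cons_neg_alphaErase hl hinj k)) 0
  simp only [mulVec_mulVec, adjugate_mul, smul_mulVec, one_mulVec, mulVec_single] at hcramer
  simpa [adjugate_vandermonde_zero_apply, mul_comm] using hcramer.symm

lemma piTau_mul_residualErase (hl : ∀ i, l i ≠ 0) (hinj : Function.Injective l)
    (k : Fin (n + 1)) :
    piTau l (univ.erase k) * residualErase l k =
      (-1) ^ (k : ℕ) * (vandermonde (l ∘ k.succAbove)).det * (vandermonde l).det := by
  have hcramer := residualErase_mul_det_selLV hl hinj k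
  rw [det_selLV_univ_erase] at hcramer
  have hsign : ((-1 : ℝ) ^ (k : ℕ)) ^ 2 = 1 := by rw [← pow_mul, pow_mul', neg_one_sq, one_pow]
  rw [piTau_univ_erase, ← hcramer]
  linear_combination (-(∏ a, l (k.succAbove a)) * (vandermonde (l ∘ k.succAbove)).det ^ 2 *
    residualErase l k) * hsign

lemma Bmat_mulVec_alphaErase (hl : ∀ i, l i ≠ 0) (hinj : Function.Injective l)
    (ψ : Fin (n + 1) → ℝ) (k : Fin (n + 1)) :
    Bmat l ψ n *ᵥ alphaErase l k =
      fun a : Fin n => ∑ i, l i ^ (a : ℕ) * ψ i - l k ^ (a : ℕ) * ψ k * residualErase l k := by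
  funext a
  have hrow : (Bmat l ψ n *ᵥ alphaErase l k) a =
      ∑ i, l i ^ (a : ℕ) * ψ i * ∑ b : Fin n, l i ^ ((b : ℕ) + 1) * alphaErase l k b := by
    simp only [mulVec, dotProduct, Bmat, of_apply, sum_mul, mul_sum]
    rw [sum_comm]
    exact sum_congr rfl fun i _ => sum_congr rfl fun b _ => by ring
  have hother : ∀ i ∈ univ.erase k,
      l i ^ (a : ℕ) * ψ i * ∑ b : Fin n, l i ^ ((b : ℕ) + 1) * alphaErase l k b =
        l i ^ (a : ℕ) * ψ i := fun i hi => by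
    rw [alphaErase, sum_pow_succ_mul_alphaTau_of_mem hl hinj _ hi, mul_one]
  rw [hrow, ← add_sum_erase _ _ (mem_univ k), sum_congr rfl hother,
    ← add_sum_erase _ (fun i => l i ^ (a : ℕ) * ψ i) (mem_univ k), residualErase]
  ring

lemma sum_averagingWeight_mul_residualErase (hl : ∀ i, l i ≠ 0) (hinj : Function.Injective l)
    (ψ : Fin (n + 1) → ℝ) (a : Fin n) :
    ∑ k, averagingWeight l ψ k * (l k ^ (a : ℕ) * ψ k * residualErase l k) = 0 := by
  have hterm : ∀ k, averagingWeight l ψ k * (l k ^ (a : ℕ) * ψ k * residualErase l k) =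
      (∏ i, ψ i) * (vandermonde l).det *
        ((-1) ^ (k : ℕ) * (vandermonde (l ∘ k.succAbove)).det * l k ^ (a : ℕ)) := fun k => by
    rw [← prod_erase_mul _ _ (mem_univ k), averagingWeight, psiPow]
    linear_combination (∏ i ∈ univ.erase k, ψ i) * ψ k * l k ^ (a : ℕ) *
      piTau_mul_residualErase hl hinj k
  rw [sum_congr rfl fun k _ => hterm k, ← mul_sum,
    sum_neg_one_pow_mul_det_vandermonde_succAbove, mul_zero]

lemma Bmat_mulVec_centerMass (hl : ∀ i, l i ≠ 0) (hinj : Function.Injective l)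
    {ψ : Fin (n + 1) → ℝ} (hw : ∑ k, averagingWeight l ψ k ≠ 0) :
    Bmat l ψ n *ᵥ univ.centerMass (averagingWeight l ψ) (alphaErase l) =
      fun a : Fin n => ∑ i, l i ^ (a : ℕ) * ψ i := by
  funext a
  simp only [centerMass, mulVec_smul, mulVec_sum, Pi.smul_apply, smul_eq_mul, Finset.sum_apply,
    Bmat_mulVec_alphaErase hl hinj, mul_sub, sum_sub_distrib,
    sum_averagingWeight_mul_residualErase hl hinj, ← sum_mul, sub_zero]
  field_simp

lemma averagingWeight_nonneg (hpos : ∀ i, 0 < l i) (hinj : Function.Injective l)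
    {ψ : Fin (n + 1) → ℝ} (hψ : ∀ i, 0 ≤ ψ i) (k : Fin (n + 1)) :
    0 ≤ averagingWeight l ψ k :=
  mul_nonneg (prod_nonneg fun i _ => hψ i) (piTau_univ_erase_pos hpos hinj k).le

lemma exists_forall_ne_imp_ne_zero_of_le_suppCard {ψ : Fin (n + 1) → ℝ}
    (hsupp : n ≤ suppCard ψ) : ∃ k, ∀ i, i ≠ k → ψ i ≠ 0 := by
  have hzeros : #{i | ψ i = 0} ≤ 1 := by
    have hsplit := card_filter_add_card_filter_not (s := univ) (fun i => ψ i = 0)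
    rw [suppCard_eq_card_filter] at hsupp
    simp only [card_univ, Fintype.card_fin, ne_eq] at hsplit hsupp
    omega
  by_contra! h
  obtain ⟨i, -, hi⟩ := h 0
  obtain ⟨j, hji, hj⟩ := h i
  exact hji (card_le_one.1 hzeros j (by simp [hj]) i (by simp [hi]))

lemma sum_averagingWeight_pos (hpos : ∀ i, 0 < l i) (hinj : Function.Injective l)
    {ψ : Fin (n + 1) → ℝ} (hψ : ∀ i, 0 ≤ ψ i) (hsupp : n ≤ suppCard ψ) :
    0 < ∑ k, averagingWeight l ψ k := by
  obtain ⟨k, hk⟩ := exists_forall_ne_imp_ne_zero_of_le_suppCard hsupp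
  refine sum_pos' (fun k _ => averagingWeight_nonneg hpos hinj hψ k) ⟨k, mem_univ k, ?_⟩
  refine mul_pos (prod_pos fun i hi => ?_) (piTau_univ_erase_pos hpos hinj k)
  exact (hψ i).lt_of_ne (hk i (ne_of_mem_erase hi)).symm

theorem alphaMap_eq_centerMass (hpos : ∀ i, 0 < l i) (hinj : Function.Injective l)
    {ψ : Fin (n + 1) → ℝ} (hψ : ∀ i, 0 ≤ ψ i) (hsupp : n ≤ suppCard ψ) :
    alphaMap l ψ n = univ.centerMass (averagingWeight l ψ) (alphaErase l) := by
  have hl : ∀ i, l i ≠ 0 := fun i => (hpos i).ne'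
  rw [alphaMap, ← Bmat_mulVec_centerMass hl hinj (sum_averagingWeight_pos hpos hinj hψ hsupp).ne',
    mulVec_mulVec, nonsing_inv_mul _ (isUnit_iff_ne_zero.2 (Bmat_det_ne_zero hpos hinj hψ hsupp)),
    one_mulVec]

theorem exists_pos_alphaMap_eq_sum (hpos : ∀ i, 0 < l i) (hinj : Function.Injective l)
    {c : Fin (n + 1) → ℝ} (hc : ∀ i, 0 < c i) (hc1 : ∑ i, c i = 1) :
    ∃ ψ : Fin (n + 1) → ℝ, (∀ i, 0 < ψ i) ∧ alphaMap l ψ n = ∑ k, c k • alphaErase l k := by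
  set ψ : Fin (n + 1) → ℝ := fun i => piTau l (univ.erase i) / c i
  have hψ : ∀ i, 0 < ψ i := fun i => div_pos (piTau_univ_erase_pos hpos hinj i) (hc i)
  have hweight : averagingWeight l ψ = (∏ i, ψ i) • c := by
    funext k
    have hpi : piTau l (univ.erase k) = ψ k * c k := (div_mul_cancel₀ _ (hc k).ne').symm
    rw [averagingWeight, psiPow, hpi, ← prod_erase_mul _ _ (mem_univ k), Pi.smul_apply,
      smul_eq_mul]
    ring
  refine ⟨ψ, hψ, ?_⟩
  rw [alphaMap_eq_centerMass hpos hinj (fun i => (hψ i).le), hweight,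
    centerMass_smul_left _ _ (prod_pos fun i _ => hψ i).ne', centerMass_eq_of_sum_1 _ _ hc1]
  have hsupp := suppCard_eq_of_forall_ne_zero fun i => (hψ i).ne'
  omega

end Erase

section ConvexHull

variable {ι E : Type*} [Fintype ι] [AddCommGroup E] [Module ℝ E]

lemma convexHull_range_eq_image_stdSimplex (f : ι → E) :
    convexHull ℝ (Set.range f) = Fintype.linearCombination ℝ f '' stdSimplex ℝ ι := by
  classical
  rw [← convexHull_rangle_single_eq_stdSimplex, LinearMap.image_convexHull, ← Set.range_comp]
  congr 2
  funext i
  simp [Fintype.linearCombination_apply_single]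

lemma stdSimplex_subset_closure_pos :
    stdSimplex ℝ ι ⊆ closure {c : ι → ℝ | (∀ i, 0 < c i) ∧ ∑ i, c i = 1} := by
  intro c hc
  have : Nonempty ι := by
    by_contra! h
    simpa using hc.2
  have hcard : (0 : ℝ) < Fintype.card ι := by exact_mod_cast Fintype.card_pos
  have hseg : openSegment ℝ c (fun _ => (Fintype.card ι : ℝ)⁻¹) ⊆
      {c : ι → ℝ | (∀ i, 0 < c i) ∧ ∑ i, c i = 1} := by
    rintro _ ⟨a, b, ha, hb, hab, rfl⟩
    refine ⟨fun i => ?_, ?_⟩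
    · have := hc.1 i
      simp only [Pi.add_apply, Pi.smul_apply, smul_eq_mul]
      positivity
    · simp only [Pi.add_apply, Pi.smul_apply, smul_eq_mul, sum_add_distrib, ← mul_sum, hc.2,
        sum_const, card_univ, nsmul_eq_mul]
      field_simp
      linarith
  exact closure_mono hseg (segment_subset_closure_openSegment (left_mem_segment ℝ _ _))

lemma convexHull_range_subset_closure_pos_combinations [TopologicalSpace E]
    [IsTopologicalAddGroup E] [ContinuousSMul ℝ E] (f : ι → E) :
    convexHull ℝ (Set.range f) ⊆
      closure ((fun c => ∑ i, c i • f i) '' {c : ι → ℝ | (∀ i, 0 < c i) ∧ ∑ i, c i = 1}) := by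
  have hL : ⇑(Fintype.linearCombination ℝ f) = fun c => ∑ i, c i • f i :=
    funext (Fintype.linearCombination_apply ℝ f)
  rw [convexHull_range_eq_image_stdSimplex, hL]
  exact (Set.image_mono stdSimplex_subset_closure_pos).trans
    (image_closure_subset_closure_image (by fun_prop))

end ConvexHull

theorem closure_alphaMap_image_eq_convexHull {n : ℕ} {l : Fin (n + 1) → ℝ}
    (hpos : ∀ i, 0 < l i) (hinj : Function.Injective l) :
    closure {x : Fin n → ℝ | ∃ ψ : Fin (n + 1) → ℝ,
        (∀ i, 0 ≤ ψ i) ∧ n ≤ suppCard ψ ∧ x = alphaMap l ψ n} =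
      convexHull ℝ (Set.range (alphaErase l)) := by
  refine Set.Subset.antisymm (closure_minimal ?_ ((Set.finite_range _).isClosed_convexHull ℝ)) ?_
  · rintro _ ⟨ψ, hψ, hsupp, rfl⟩
    rw [alphaMap_eq_centerMass hpos hinj hψ hsupp]
    exact univ.centerMass_mem_convexHull (fun k _ => averagingWeight_nonneg hpos hinj hψ k)
      (sum_averagingWeight_pos hpos hinj hψ hsupp) fun k _ => Set.mem_range_self k
  · refine (convexHull_range_subset_closure_pos_combinations _).trans (closure_mono ?_)
    rintro _ ⟨c, ⟨hc, hc1⟩, rfl⟩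
    obtain ⟨ψ, hψ, hαψ⟩ := exists_pos_alphaMap_eq_sum hpos hinj hc hc1
    have hsupp := suppCard_eq_of_forall_ne_zero fun i => (hψ i).ne'
    exact ⟨ψ, fun i => (hψ i).le, by omega, hαψ.symm⟩

theorem stmt4 {n : ℕ} (l : Fin (n + 1) → ℝ) (hpos : ∀ i, 0 < l i)
    (hanti : StrictAnti l) :
    (∀ c : Fin (n + 1) → ℝ, (∀ i, 0 < c i) → ∑ i, c i = 1 →
        ∃ ψ : Fin (n + 1) → ℝ, (∀ i, 0 < ψ i) ∧
          alphaMap l ψ n =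
            ∑ i, c i • alphaTau l n (Finset.univ.erase i)
              (by simp [Finset.card_erase_of_mem])) ∧
      closure {x : Fin n → ℝ | ∃ ψ : Fin (n + 1) → ℝ,
          (∀ i, 0 ≤ ψ i) ∧ n ≤ suppCard ψ ∧ x = alphaMap l ψ n} =
        convexHull ℝ (Set.range fun i : Fin (n + 1) =>
          alphaTau l n (Finset.univ.erase i) (by simp [Finset.card_erase_of_mem])) :=
  ⟨fun _ hc hc1 => exists_pos_alphaMap_eq_sum hpos hanti.injective hc hc1,
    closure_alphaMap_image_eq_convexHull hpos hanti.injective⟩
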